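/- arXiv:1909.07339 — 5 statements merged into one kernel-verified Lean document; each statement's English description precedes it below -/
import Mathlib

section
/- If p is a uniform random variable on [0,1], then the missing bit h(p) = 2·1{p < 1/2} − 1 and the masked p-value g(p) = min(p, 1−p) are independent random variables. -/
open MeasureTheory ProbabilityTheory

/-- The missing bit `h(p) = 2·1{p < 1/2} − 1`. -/
noncomputable def missingBit (x : ℝ) : ℝ := 2 * (if x < 1/2 then 1 else 0) - 1

/-- The masked p-value `g(p) = min(p, 1−p)`. -/
noncomputable def maskedP (x : ℝ) : ℝ := min x (1 - x)

lemma maskedP_measurable : Measurable maskedP :=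
  measurable_id.min (measurable_const.sub measurable_id)

lemma missingBit_measurable : Measurable missingBit := by
  unfold missingBit
  exact (measurable_const.mul
    (Measurable.ite measurableSet_Iio measurable_const measurable_const)).sub measurable_const

lemma missingBit_of_lt {x : ℝ} (hx : x < 1/2) : missingBit x = 1 := by
  unfold missingBit; rw [if_pos hx]; norm_num

lemma missingBit_of_ge {x : ℝ} (hx : ¬ x < 1/2) : missingBit x = -1 := by
  unfold missingBit; rw [if_neg hx]; norm_num

lemma ennhalf : ENNReal.ofReal (1/2 : ℝ) = 1/2 := by
  rw [ENNReal.ofReal_div_of_pos (by norm_num)]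
  norm_num

lemma volA (t : Set ℝ) (ht : MeasurableSet t) :
    (volume.restrict (Set.Icc (0:ℝ) 1)) (Set.Iio (1/2) ∩ maskedP ⁻¹' t)
      = volume (t ∩ Set.Icc 0 (1/2)) := by
  rw [Measure.restrict_apply' measurableSet_Icc]
  have hset : Set.Iio (1/2) ∩ maskedP ⁻¹' t ∩ Set.Icc 0 1 = t ∩ Set.Ico 0 (1/2) := by
    ext x
    simp only [Set.mem_inter_iff, Set.mem_Iio, Set.mem_preimage, Set.mem_Icc, Set.mem_Ico,
      maskedP]
    constructor
    · rintro ⟨⟨hx, hxt⟩, h0, _⟩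
      rw [min_eq_left (by linarith)] at hxt
      exact ⟨hxt, h0, hx⟩
    · rintro ⟨hxt, h0, hx⟩
      exact ⟨⟨hx, by rwa [min_eq_left (by linarith)]⟩, h0, by linarith⟩
  rw [hset]
  refine measure_congr ?_
  exact (Filter.EventuallyEq.refl _ t).inter Ico_ae_eq_Icc

lemma volB (t : Set ℝ) (ht : MeasurableSet t) :
    (volume.restrict (Set.Icc (0:ℝ) 1)) (Set.Ici (1/2) ∩ maskedP ⁻¹' t)
      = volume (t ∩ Set.Icc 0 (1/2)) := by
  rw [Measure.restrict_apply' measurableSet_Icc]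
  have hset : Set.Ici (1/2) ∩ maskedP ⁻¹' t ∩ Set.Icc 0 1
      = (fun x : ℝ => 1 - x) ⁻¹' (t ∩ Set.Icc 0 (1/2)) := by
    ext x
    simp only [Set.mem_inter_iff, Set.mem_Ici, Set.mem_preimage, Set.mem_Icc, maskedP]
    constructor
    · rintro ⟨⟨hx, hxt⟩, h0, h1⟩
      rw [min_eq_right (by linarith)] at hxt
      exact ⟨hxt, by linarith, by linarith⟩
    · rintro ⟨hxt, h0, h1⟩
      exact ⟨⟨by linarith, by rwa [min_eq_right (by linarith)]⟩, by linarith, by linarith⟩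
  rw [hset]
  exact (Measure.measurePreserving_sub_left volume 1).measure_preimage
    (ht.inter measurableSet_Icc).nullMeasurableSet

/-- If `p` is uniform on `[0,1]`, then `h(p)` and `g(p)` are independent. -/
theorem missingBit_indep_maskedP {Ω : Type*} [MeasurableSpace Ω]
    (P : Measure Ω) [IsProbabilityMeasure P] (p : Ω → ℝ) (hpmeas : Measurable p)
    (hp : Measure.map p P = volume.restrict (Set.Icc (0:ℝ) 1)) :
    IndepFun (fun ω => missingBit (p ω)) (fun ω => maskedP (p ω)) P := by
  rw [indepFun_iff_measure_inter_preimage_eq_mul]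
  intro s t hs ht
  set μ := volume.restrict (Set.Icc (0:ℝ) 1) with hμ
  have hmap : ∀ E : Set ℝ, MeasurableSet E → P (p ⁻¹' E) = μ E := by
    intro E hE
    rw [← hp, Measure.map_apply hpmeas hE]
  have hgt : MeasurableSet (maskedP ⁻¹' t) := maskedP_measurable ht
  have hfs : MeasurableSet (missingBit ⁻¹' s) := missingBit_measurable hs
  have h1 : (fun ω => missingBit (p ω)) ⁻¹' s = p ⁻¹' (missingBit ⁻¹' s) := rfl
  have h2 : (fun ω => maskedP (p ω)) ⁻¹' t = p ⁻¹' (maskedP ⁻¹' t) := rfl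
  rw [h1, h2, ← Set.preimage_inter, hmap _ (hfs.inter hgt), hmap _ hfs, hmap _ hgt]
  set c := volume (t ∩ Set.Icc (0:ℝ) (1/2)) with hc
  have hgtot : μ (maskedP ⁻¹' t) = 2 * c := by
    have hsplit : maskedP ⁻¹' t
        = (Set.Iio (1/2) ∩ maskedP ⁻¹' t) ∪ (Set.Ici (1/2) ∩ maskedP ⁻¹' t) := by
      rw [← Set.union_inter_distrib_right, Set.Iio_union_Ici, Set.univ_inter]
    rw [hsplit, measure_union
      ((Set.Iio_disjoint_Ici le_rfl).mono Set.inter_subset_left Set.inter_subset_left)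
      (measurableSet_Ici.inter hgt), volA t ht, volB t ht, two_mul]
  have hIio : μ (Set.Iio (1/2)) = 1/2 := by
    rw [hμ, Measure.restrict_apply measurableSet_Iio]
    have hset : Set.Iio (1/2:ℝ) ∩ Set.Icc 0 1 = Set.Ico 0 (1/2) := by
      ext x
      simp only [Set.mem_inter_iff, Set.mem_Iio, Set.mem_Icc, Set.mem_Ico]
      constructor
      · rintro ⟨hx, h0, _⟩; exact ⟨h0, hx⟩
      · rintro ⟨h0, hx⟩; exact ⟨hx, h0, by linarith⟩
    rw [hset, Real.volume_Ico, show (1/2 - 0 : ℝ) = 1/2 by norm_num, ennhalf]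
  have hIci : μ (Set.Ici (1/2)) = 1/2 := by
    rw [hμ, Measure.restrict_apply measurableSet_Ici]
    have hset : Set.Ici (1/2:ℝ) ∩ Set.Icc 0 1 = Set.Icc (1/2) 1 := by
      ext x
      simp only [Set.mem_inter_iff, Set.mem_Ici, Set.mem_Icc]
      constructor
      · rintro ⟨hx, _, h1⟩; exact ⟨hx, h1⟩
      · rintro ⟨hx, h1⟩; exact ⟨hx, by linarith, h1⟩
    rw [hset, Real.volume_Icc, show (1 - 1/2 : ℝ) = 1/2 by norm_num, ennhalf]
  have hkey : ∀ d : ENNReal, d = 1/2 * (2 * c) → d = 1/2 * (2 * c) := fun _ h => h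
  by_cases hs1 : (1:ℝ) ∈ s <;> by_cases hs2 : (-1:ℝ) ∈ s
  · have hpre : missingBit ⁻¹' s = Set.univ := by
      ext x
      simp only [Set.mem_preimage, Set.mem_univ, iff_true]
      by_cases hx : x < 1/2
      · rw [missingBit_of_lt hx]; exact hs1
      · rw [missingBit_of_ge hx]; exact hs2
    rw [hpre, Set.univ_inter]
    have huniv : μ Set.univ = 1 := by
      rw [hμ, Measure.restrict_apply_univ, Real.volume_Icc]
      norm_num
    rw [huniv, one_mul]
  · have hpre : missingBit ⁻¹' s = Set.Iio (1/2) := by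
      ext x
      simp only [Set.mem_preimage, Set.mem_Iio]
      by_cases hx : x < 1/2
      · rw [missingBit_of_lt hx]; exact ⟨fun _ => hx, fun _ => hs1⟩
      · rw [missingBit_of_ge hx]; exact ⟨fun h => absurd h hs2, fun h => absurd h hx⟩
    rw [hpre, volA t ht, hIio, hgtot, ← mul_assoc,
      show ((1:ENNReal)/2*2) = 1 from by
        rw [one_div, ENNReal.inv_mul_cancel (by norm_num) (by norm_num)], one_mul]
  · have hpre : missingBit ⁻¹' s = Set.Ici (1/2) := by
      ext x
      simp only [Set.mem_preimage, Set.mem_Ici]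
      by_cases hx : x < 1/2
      · rw [missingBit_of_lt hx]
        exact ⟨fun h => absurd h hs1, fun h => absurd hx (not_lt.mpr h)⟩
      · rw [missingBit_of_ge hx]; exact ⟨fun _ => not_lt.mp hx, fun _ => hs2⟩
    rw [hpre, volB t ht, hIci, hgtot, ← mul_assoc,
      show ((1:ENNReal)/2*2) = 1 from by
        rw [one_div, ENNReal.inv_mul_cancel (by norm_num) (by norm_num)], one_mul]
  · have hpre : missingBit ⁻¹' s = ∅ := by
      ext x
      simp only [Set.mem_preimage, Set.mem_empty_iff_false, iff_false]
      by_cases hx : x < 1/2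
      · rw [missingBit_of_lt hx]; exact hs1
      · rw [missingBit_of_ge hx]; exact hs2
    rw [hpre, Set.empty_inter]
    simp
end

section
/- Let (S_k)_{k≥1} be a process such that S_k − Σ_{i=1}^k m_i is a sum of k independent standard Gaussians, where m_i ≥ 0 are deterministic. Let u_α(k) be a boundary such that for a standard Gaussian random walk W_k, P(∃k: W_k ≥ u_α(k)) ≤ α, and assume by symmetry P(∃k: W_k ≤ −u_β(k)) ≤ β. If there exists k* with Σ_{i=1}^{k*} m_i ≥ u_α(k*) + u_β(k*), then P(∃k: S_k ≥ u_α(k)) ≥ 1 − β. -/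
open MeasureTheory ProbabilityTheory
open scoped ENNReal NNReal BigOperators

/-! If the drifted walk `S` stays below `u_α` forever, then at the step `k*` where the
cumulative drift exceeds `u_α + u_β` the pure noise walk satisfies `W_{k*} = S_{k*} - Σ m_i < u_α(k*) - Σ m_i ≤ -u_β(k*)`. So every path either makes `S` cross
`u_α` or makes `W` cross `-u_β`, and the latter has probability at most `β`. -/

lemma gaussianReal_Iic_pos (μ : ℝ) {v : ℝ≥0} (hv : v ≠ 0) (a : ℝ) :
    0 < gaussianReal μ v (Set.Iic a) := by
  refine pos_iff_ne_zero.mpr fun h ↦ ?_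
  have := gaussianReal_absolutelyContinuous' μ hv h
  simp [Real.volume_Iic] at this

lemma ofReal_one_sub_le_of_union_eq_univ {Ω : Type*} [MeasurableSpace Ω] {P : Measure Ω}
    [IsProbabilityMeasure P] {A B : Set Ω} {β : ℝ} (hAB : A ∪ B = Set.univ)
    (hB : P B ≤ ENNReal.ofReal β) (hB₀ : P B ≠ 0) :
    ENNReal.ofReal (1 - β) ≤ P A := by
  have hβ : 0 ≤ β := by
    by_contra! hβ
    exact hB₀ (nonpos_iff_eq_zero.mp (hB.trans (ENNReal.ofReal_of_nonpos hβ.le).le))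
  have hcover : 1 ≤ P A + ENNReal.ofReal β :=
    calc 1 = P (A ∪ B) := by rw [hAB, measure_univ]
      _ ≤ P A + P B := measure_union_le A B
      _ ≤ P A + ENNReal.ofReal β := by gcongr
  rw [ENNReal.ofReal_sub _ hβ, ENNReal.ofReal_one]
  exact tsub_le_iff_right.mpr hcover

lemma upper_crossing_with_drift_or_lower_crossing {m g uα uβ : ℕ → ℝ} {k : ℕ} (hk : 1 ≤ k)
    (hcross : uα k + uβ k ≤ ∑ i ∈ Finset.range k, m i) :
    (∃ k ≥ 1, uα k ≤ ∑ i ∈ Finset.range k, (m i + g i)) ∨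
      ∃ k ≥ 1, ∑ i ∈ Finset.range k, g i ≤ -uβ k := by
  by_cases hup : uα k ≤ ∑ i ∈ Finset.range k, (m i + g i)
  · exact .inl ⟨k, hk, hup⟩
  · rw [Finset.sum_add_distrib] at hup
    exact .inr ⟨k, hk, by linarith⟩

theorem martingale_stouffer_power_sufficient_general {Ω : Type*} [MeasurableSpace Ω]
    (P : Measure Ω) [IsProbabilityMeasure P]
    (m : ℕ → ℝ)
    (G : ℕ → Ω → ℝ)
    (hdist : ∀ i, Measure.map (G i) P = gaussianReal 0 1)
    (uα uβ : ℕ → ℝ) (β : ℝ)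
    (huβ : P {ω | ∃ k ≥ 1, ∑ i ∈ Finset.range k, G i ω ≤ -uβ k} ≤ ENNReal.ofReal β)
    (hcross : ∃ k ≥ 1, uα k + uβ k ≤ ∑ i ∈ Finset.range k, m i) :
    ENNReal.ofReal (1 - β)
      ≤ P {ω | ∃ k ≥ 1, uα k ≤ ∑ i ∈ Finset.range k, (m i + G i ω)} := by
  obtain ⟨k, hk, hk_cross⟩ := hcross
  refine ofReal_one_sub_le_of_union_eq_univ ?_ huβ ?_
  · exact Set.eq_univ_of_forall fun ω ↦
      upper_crossing_with_drift_or_lower_crossing (g := fun i ↦ G i ω) hk hk_cross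
  -- Only needed for `β < 0`, where `ENNReal.ofReal β = 0`: the first step alone crosses `-u_β`
  -- with positive probability.
  · have hG₀ : AEMeasurable (G 0) P :=
      .of_map_ne_zero (by simp [hdist 0, IsProbabilityMeasure.ne_zero])
    have hfirst_step : G 0 ⁻¹' Set.Iic (-uβ 1) ⊆
        {ω | ∃ k ≥ 1, ∑ i ∈ Finset.range k, G i ω ≤ -uβ k} :=
      fun ω hω ↦ ⟨1, le_rfl, by simpa using hω⟩
    refine (measure_mono_null hfirst_step).mt (pos_iff_ne_zero.mp ?_)
    rw [← Measure.map_apply_of_aemeasurable hG₀ measurableSet_Iic, hdist 0]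
    exact gaussianReal_Iic_pos 0 one_ne_zero _

/-- If `S_k = Σ_{i≤k} (m_i + G_i)` with `G_i` i.i.d. standard Gaussians and deterministic
`m_i ≥ 0`, and the boundaries `u_α, u_β` satisfy the uniform crossing bounds for the
centered Gaussian random walk, then `Σ_{i≤k*} m_i ≥ u_α(k*) + u_β(k*)` for some `k*`
implies that the crossing probability (power) is at least `1 − β`. -/
theorem martingale_stouffer_power_sufficient {Ω : Type*} [MeasurableSpace Ω]
    (P : Measure Ω) [IsProbabilityMeasure P]
    (m : ℕ → ℝ) (hm : ∀ i, 0 ≤ m i)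
    (G : ℕ → Ω → ℝ)
    (hindep : iIndepFun G P)
    (hdist : ∀ i, Measure.map (G i) P = gaussianReal 0 1)
    (uα uβ : ℕ → ℝ) (α β : ℝ)
    (huα : P {ω | ∃ k ≥ 1, uα k ≤ ∑ i ∈ Finset.range k, G i ω} ≤ ENNReal.ofReal α)
    (huβ : P {ω | ∃ k ≥ 1, ∑ i ∈ Finset.range k, G i ω ≤ -uβ k} ≤ ENNReal.ofReal β)
    (hcross : ∃ k ≥ 1, uα k + uβ k ≤ ∑ i ∈ Finset.range k, m i) :
    ENNReal.ofReal (1 - β)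
      ≤ P {ω | ∃ k ≥ 1, uα k ≤ ∑ i ∈ Finset.range k, (m i + G i ω)} :=
  martingale_stouffer_power_sufficient_general P m G hdist uα uβ β huβ hcross
end

section
/- Under the same setup, if α < 1−β and for all k, Σ_{i=1}^k m_i ≤ u_α(k) − u_{1−β}(k), then P(∃k: S_k ≥ u_α(k)) ≤ 1 − β. -/
open MeasureTheory ProbabilityTheory
open scoped ENNReal NNReal BigOperators

theorem setOf_exists_le_sum_add_subset {Ω : Type*} (m : ℕ → ℝ) (G : ℕ → Ω → ℝ)
    (a b : ℕ → ℝ) (hab : ∀ k ≥ 1, ∑ i ∈ Finset.range k, m i ≤ a k - b k) :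
    {ω | ∃ k ≥ 1, a k ≤ ∑ i ∈ Finset.range k, (m i + G i ω)}
      ⊆ {ω | ∃ k ≥ 1, b k ≤ ∑ i ∈ Finset.range k, G i ω} := by
  rintro ω ⟨k, hk, hcross⟩
  refine ⟨k, hk, ?_⟩
  rw [Finset.sum_add_distrib] at hcross
  linarith [hab k hk]

theorem martingale_stouffer_power_necessary_general {Ω : Type*} [MeasurableSpace Ω]
    (P : Measure Ω)
    (m : ℕ → ℝ)
    (G : ℕ → Ω → ℝ)
    (u : ℝ → ℕ → ℝ)
    (hu : ∀ γ ∈ Set.Ioo (0:ℝ) 1,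
      P {ω | ∃ k ≥ 1, u γ k ≤ ∑ i ∈ Finset.range k, G i ω} ≤ ENNReal.ofReal γ)
    (α β : ℝ) (hβ : β ∈ Set.Ioo (0:ℝ) 1)
    (hbound : ∀ k ≥ 1, ∑ i ∈ Finset.range k, m i ≤ u α k - u (1 - β) k) :
    P {ω | ∃ k ≥ 1, u α k ≤ ∑ i ∈ Finset.range k, (m i + G i ω)}
      ≤ ENNReal.ofReal (1 - β) :=
  (measure_mono (setOf_exists_le_sum_add_subset m G _ _ hbound)).trans
    (hu (1 - β) ⟨by linarith [hβ.2], by linarith [hβ.1]⟩)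

/-- If `S_k = Σ_{i≤k} (m_i + G_i)` with `G_i` i.i.d. standard Gaussians and deterministic
`m_i ≥ 0`, the boundary family `u_γ` satisfies the uniform crossing bound at every level
`γ ∈ (0,1)`, `α < 1 − β`, and `Σ_{i≤k} m_i ≤ u_α(k) − u_{1−β}(k)` for all `k`, then the
crossing probability (power) is at most `1 − β`. -/
theorem martingale_stouffer_power_necessary {Ω : Type*} [MeasurableSpace Ω]
    (P : Measure Ω) [IsProbabilityMeasure P]
    (m : ℕ → ℝ) (hm : ∀ i, 0 ≤ m i)
    (G : ℕ → Ω → ℝ)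
    (hindep : iIndepFun G P)
    (hdist : ∀ i, Measure.map (G i) P = gaussianReal 0 1)
    (u : ℝ → ℕ → ℝ)
    (hu : ∀ γ ∈ Set.Ioo (0:ℝ) 1,
      P {ω | ∃ k ≥ 1, u γ k ≤ ∑ i ∈ Finset.range k, G i ω} ≤ ENNReal.ofReal γ)
    (α β : ℝ) (hα : α ∈ Set.Ioo (0:ℝ) 1) (hβ : β ∈ Set.Ioo (0:ℝ) 1) (hαβ : α < 1 - β)
    (hbound : ∀ k ≥ 1, ∑ i ∈ Finset.range k, m i ≤ u α k - u (1 - β) k) :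
    P {ω | ∃ k ≥ 1, u α k ≤ ∑ i ∈ Finset.range k, (m i + G i ω)}
      ≤ ENNReal.ofReal (1 - β) :=
  martingale_stouffer_power_necessary_general P m G u hu α β hβ hbound
end

section
/- For each c ∈ (0,1), the calibrator f_c(p) = c·p^{c−1} on (0,1] is nonincreasing in p and satisfies ∫_0^1 f_c(p) dp = 1; moreover the mixture f_m(p) = ∫_0^1 c·p^{c−1} dc equals (1 − p + p log p)/(p (log p)²) for p ∈ (0,1) and also satisfies ∫_0^1 f_m(p) dp = 1. -/
/-!
Since `c - 1 < 0`, each `f_c` is antitone, and `∫_0^1 c p^(c-1) dp = [p^c]_0^1 = 1`. Writing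
`p^(c-1) = exp ((c-1) log p)`, the mixture is computed with the antiderivative
`(c / log p - 1 / (log p)^2) p^(c-1)` in `c`. The mixture is in turn the derivative of
`G p = ∫_0^1 p^c dc = (p - 1) / log p`, which tends to `0` at `0⁺` and to `1` at `1⁻`; as the
mixture is nonnegative it is integrable on `(0, 1)`, with integral `1 - 0`.
-/

open Real Set Filter Topology intervalIntegral

theorem integral_eq_sub_of_hasDerivAt_of_tendsto_of_nonneg {f f' : ℝ → ℝ} {a b fa fb : ℝ}
    (hab : a < b) (hderiv : ∀ x ∈ Ioo a b, HasDerivAt f (f' x) x)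
    (hpos : ∀ x ∈ Ioo a b, 0 ≤ f' x)
    (ha : Tendsto f (𝓝[>] a) (𝓝 fa)) (hb : Tendsto f (𝓝[<] b) (𝓝 fb)) :
    ∫ x in a..b, f' x = fb - fa := by
  classical
  -- Redefined by its limits at the endpoints, `f` is continuous on `[a, b]`, so its nonnegative
  -- derivative is integrable.
  let F := Function.update (Function.update f a fa) b fb
  have hFderiv : ∀ x ∈ Ioo a b, HasDerivAt F (f' x) x := fun x hx =>
    (hderiv x hx).congr_of_eventuallyEq <| by
      filter_upwards [Ioo_mem_nhds hx.1 hx.2] with y hy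
      simp only [F, Function.update_of_ne hy.2.ne, Function.update_of_ne hy.1.ne']
  have hFcont : ContinuousOn F (Icc a b) := by
    rw [continuousOn_update_iff, continuousOn_update_iff, Icc_sdiff_right, Ico_sdiff_left]
    refine ⟨⟨fun x hx => (hderiv x hx).continuousAt.continuousWithinAt,
      fun _ => ha.mono_left (nhdsWithin_mono _ Ioo_subset_Ioi_self)⟩, fun _ => ?_⟩
    refine (hb.congr' ?_).mono_left (nhdsWithin_mono _ Ico_subset_Iio_self)
    filter_upwards [Ioo_mem_nhdsLT hab] with x hx using (Function.update_of_ne hx.1.ne' _ _).symm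
  have hint : IntervalIntegrable f' MeasureTheory.volume a b :=
    intervalIntegrable_deriv_of_nonneg (uIcc_of_le hab.le ▸ hFcont)
      (by simpa [hab.le] using hFderiv) (by simpa [hab.le] using hpos)
  exact integral_eq_sub_of_hasDerivAt_of_tendsto hab hderiv hint ha hb

theorem integral_mul_rpow_sub_one {c : ℝ} (hc : 0 < c) :
    ∫ p in (0:ℝ)..1, c * p ^ (c - 1) = 1 := by
  rw [integral_const_mul, integral_rpow (Or.inl (by linarith)), sub_add_cancel, one_rpow,
    zero_rpow hc.ne', sub_zero, mul_one_div_cancel hc.ne']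

theorem hasDerivAt_mul_rpow_sub_one_antideriv {p : ℝ} (hp : 0 < p) (hlog : log p ≠ 0) (c : ℝ) :
    HasDerivAt (fun c => (c / log p - 1 / log p ^ 2) * p ^ (c - 1)) (c * p ^ (c - 1)) c := by
  have hpow : HasDerivAt (fun c => p ^ (c - 1)) (p ^ (c - 1) * log p) c := by
    simpa using (hasStrictDerivAt_const_rpow hp (c - 1)).hasDerivAt.comp_sub_const c 1
  refine ((((hasDerivAt_id' c).div_const (log p)).sub_const (1 / log p ^ 2)).mul
    hpow).congr_deriv ?_
  field_simp
  ring

theorem integral_exponent_mul_rpow_sub_one {p : ℝ} (hp : 0 < p) (hp1 : p ≠ 1) :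
    ∫ c in (0:ℝ)..1, c * p ^ (c - 1) = (1 - p + p * log p) / (p * log p ^ 2) := by
  have hlog : log p ≠ 0 := log_ne_zero_of_pos_of_ne_one hp hp1
  have hint : IntervalIntegrable (fun c => c * p ^ (c - 1)) MeasureTheory.volume 0 1 :=
    (continuous_id.mul (continuous_const.rpow (continuous_sub_right 1) fun _ =>
      Or.inl hp.ne')).intervalIntegrable _ _
  rw [integral_eq_sub_of_hasDerivAt
    (fun c _ => hasDerivAt_mul_rpow_sub_one_antideriv hp hlog c) hint]
  simp only [zero_sub, sub_self, rpow_zero, rpow_neg_one]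
  field_simp
  ring

theorem one_sub_add_mul_log_nonneg {p : ℝ} (hp : 0 < p) : 0 ≤ 1 - p + p * log p := by
  have := mul_le_mul_of_nonneg_left (one_sub_inv_le_log_of_pos hp) hp.le
  rw [mul_sub, mul_one, mul_inv_cancel₀ hp.ne'] at this
  linarith

theorem hasDerivAt_sub_one_div_log {p : ℝ} (hp : 0 < p) (hp1 : p ≠ 1) :
    HasDerivAt (fun x => (x - 1) / log x) ((1 - p + p * log p) / (p * log p ^ 2)) p := by
  have hlog : log p ≠ 0 := log_ne_zero_of_pos_of_ne_one hp hp1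
  refine (((hasDerivAt_id' p).sub_const 1).div (hasDerivAt_log hp.ne') hlog).congr_deriv ?_
  field_simp
  ring

theorem tendsto_sub_one_div_log_nhdsGT_zero :
    Tendsto (fun x => (x - 1) / log x) (𝓝[>] 0) (𝓝 0) :=
  ((continuous_sub_right 1).tendsto' 0 (-1) (by norm_num)).mono_left nhdsWithin_le_nhds
    |>.div_atBot tendsto_log_nhdsGT_zero

theorem tendsto_sub_one_div_log_nhdsNE_one :
    Tendsto (fun x => (x - 1) / log x) (𝓝[≠] 1) (𝓝 1) := by
  have hslope : Tendsto (fun x => (slope log 1 x)⁻¹) (𝓝[≠] 1) (𝓝 1) := by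
    simpa using (hasDerivAt_iff_tendsto_slope.mp (hasDerivAt_log one_ne_zero)).inv₀ (by norm_num)
  refine hslope.congr fun x => ?_
  simp [slope_def_field, inv_div]

/-- The calibrators `f_c(p) = c·p^{c−1}` for `c ∈ (0,1)` are nonincreasing on `(0,1]` and
integrate to 1, and the mixture `f_m(p) = ∫_0^1 c·p^{c−1} dc` equals
`(1 − p + p log p)/(p (log p)²)` on `(0,1)` and also integrates to 1. -/
theorem calibrator_properties :
    (∀ c ∈ Set.Ioo (0:ℝ) 1,
      (∀ p ∈ Set.Ioc (0:ℝ) 1, ∀ q ∈ Set.Ioc (0:ℝ) 1, p ≤ q →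
        c * q ^ (c - 1) ≤ c * p ^ (c - 1))
      ∧ (∫ p in (0:ℝ)..1, c * p ^ (c - 1)) = 1)
    ∧ (∀ p ∈ Set.Ioo (0:ℝ) 1,
        (∫ c in (0:ℝ)..1, c * p ^ (c - 1))
          = (1 - p + p * Real.log p) / (p * (Real.log p)^2))
    ∧ (∫ p in (0:ℝ)..1, (1 - p + p * Real.log p) / (p * (Real.log p)^2)) = 1 := by
  refine ⟨fun c hc => ⟨fun p hp q _ hpq => ?_, integral_mul_rpow_sub_one hc.1⟩,
    fun p hp => integral_exponent_mul_rpow_sub_one hp.1 hp.2.ne, ?_⟩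
  · exact mul_le_mul_of_nonneg_left (rpow_le_rpow_of_nonpos hp.1 hpq (by linarith [hc.2])) hc.1.le
  · have hFTC := integral_eq_sub_of_hasDerivAt_of_tendsto_of_nonneg zero_lt_one
      (fun p hp => hasDerivAt_sub_one_div_log hp.1 hp.2.ne)
      (fun p hp => div_nonneg (one_sub_add_mul_log_nonneg hp.1)
        (mul_nonneg hp.1.le (sq_nonneg _)))
      tendsto_sub_one_div_log_nhdsGT_zero
      (tendsto_sub_one_div_log_nhdsNE_one.mono_left (nhdsLT_le_nhdsNE 1))
    rwa [sub_zero] at hFTC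
end

section
/- (Anytime p-value properties.) Let (S_k) be an adapted process and for each α ∈ (0,1) let u_α(k) be continuous and strictly decreasing in α, with P(∃k: S_k > u_α(k)) ≤ α under the null. Define 𝔭_t = inf{α : ∃k ≤ t, S_k > u_α(k)}. Then (i) 𝔭_{t+j} ≤ 𝔭_t for all j, t > 0; (ii) under the null, P(∃t: 𝔭_t ≤ x) ≤ x for all x ∈ (0,1); and (iii) for any stopping time τ, P(𝔭_τ ≤ x) ≤ x for all x ∈ (0,1). -/
open MeasureTheory ProbabilityTheory
open scoped ENNReal

/-! Since `u_α(k)` decreases in `α`, a crossing `S_k > u_a(k)` at some level `a` is also a crossing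
at every larger level `b < 1`. Hence `𝔭_t < b` forces the level-`b` test to reject, so the event
`∃ t, 𝔭_t ≤ x` lies inside the level-`b` rejection event for every `b ∈ (x, 1)`, whose probability is
at most `b`; letting `b ↓ x` gives validity, and a stopping time only selects one of the `t`. -/

/-- The anytime p-value `𝔭_t = inf{α ∈ (0,1) : ∃ k ≤ t, S_k > u_α(k)}` (with `inf ∅ = 1`). -/
noncomputable def anytimePValue {Ω : Type*} (u : ℝ → ℕ → ℝ) (S : ℕ → Ω → ℝ)
    (t : ℕ) (ω : Ω) : ℝ :=
  sInf ({a : ℝ | a ∈ Set.Ioo (0:ℝ) 1 ∧ ∃ k ≤ t, u a k < S k ω} ∪ {1})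

lemma anytimePValue_antitone {Ω : Type*} (u : ℝ → ℕ → ℝ) (S : ℕ → Ω → ℝ) (ω : Ω) :
    Antitone fun t => anytimePValue u S t ω := by
  intro t t' htt'
  refine csInf_le_csInf ⟨0, ?_⟩ ⟨1, Or.inr rfl⟩ ?_
  · rintro a (⟨ha, -⟩ | rfl)
    exacts [ha.1.le, zero_le_one]
  · rintro a (⟨ha, k, hk, hu⟩ | ha)
    exacts [Or.inl ⟨ha, k, hk.trans htt', hu⟩, Or.inr ha]

lemma exists_lt_of_anytimePValue_lt {Ω : Type*} {u : ℝ → ℕ → ℝ} {S : ℕ → Ω → ℝ}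
    (hanti : ∀ k, StrictAntiOn (fun a => u a k) (Set.Ioo (0:ℝ) 1))
    {t : ℕ} {ω : Ω} {b : ℝ} (hb : b < 1) (h : anytimePValue u S t ω < b) :
    ∃ k ≤ t, u b k < S k ω := by
  obtain ⟨a, ha, hab⟩ := exists_lt_of_csInf_lt (Set.singleton_nonempty 1).inr h
  rcases ha with ⟨ha, k, hk, hu⟩ | rfl
  · exact ⟨k, hk, (hanti k ha ⟨ha.1.trans hab, hb⟩ hab).trans hu⟩
  · exact absurd (hab.trans hb) (lt_irrefl 1)

lemma ENNReal.le_ofReal_of_forall_le_ofReal_Ioo {a : ℝ≥0∞} {x y : ℝ} (hxy : x < y)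
    (h : ∀ b ∈ Set.Ioo x y, a ≤ ENNReal.ofReal b) : a ≤ ENNReal.ofReal x :=
  ge_of_tendsto ((ENNReal.continuous_ofReal.tendsto x).mono_left nhdsWithin_le_nhds)
    (Filter.eventually_of_mem (Ioo_mem_nhdsGT hxy) h)

lemma measure_exists_anytimePValue_le {Ω : Type*} [MeasurableSpace Ω] (P : Measure Ω)
    {S : ℕ → Ω → ℝ} {u : ℝ → ℕ → ℝ}
    (hanti : ∀ k, StrictAntiOn (fun a => u a k) (Set.Ioo (0:ℝ) 1))
    (hnull : ∀ a ∈ Set.Ioo (0:ℝ) 1, P {ω | ∃ k, u a k < S k ω} ≤ ENNReal.ofReal a)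
    {x : ℝ} (hx : x ∈ Set.Ioo (0:ℝ) 1) :
    P {ω | ∃ t, anytimePValue u S t ω ≤ x} ≤ ENNReal.ofReal x := by
  refine ENNReal.le_ofReal_of_forall_le_ofReal_Ioo hx.2 fun b hb => ?_
  have hsub : {ω | ∃ t, anytimePValue u S t ω ≤ x} ⊆ {ω | ∃ k, u b k < S k ω} := by
    rintro ω ⟨t, ht⟩
    obtain ⟨k, -, hk⟩ := exists_lt_of_anytimePValue_lt hanti hb.2 (ht.trans_lt hb.1)
    exact ⟨k, hk⟩
  exact (measure_mono hsub).trans (hnull b ⟨hx.1.trans hb.1, hb.2⟩)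

theorem anytime_pvalue_properties_general {Ω : Type*} [m0 : MeasurableSpace Ω]
    (P : Measure Ω)
    (ℱ : Filtration ℕ m0) (S : ℕ → Ω → ℝ)
    (u : ℝ → ℕ → ℝ)
    (hanti : ∀ k, StrictAntiOn (fun a => u a k) (Set.Ioo (0:ℝ) 1))
    (hnull : ∀ a ∈ Set.Ioo (0:ℝ) 1, P {ω | ∃ k, u a k < S k ω} ≤ ENNReal.ofReal a) :
    (∀ t j : ℕ, 0 < t → 0 < j → ∀ ω,
        anytimePValue u S (t + j) ω ≤ anytimePValue u S t ω)
    ∧ (∀ x ∈ Set.Ioo (0:ℝ) 1,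
        P {ω | ∃ t, anytimePValue u S t ω ≤ x} ≤ ENNReal.ofReal x)
    ∧ (∀ τ : Ω → ℕ, IsStoppingTime ℱ (fun ω => (τ ω : WithTop ℕ)) → ∀ x ∈ Set.Ioo (0:ℝ) 1,
        P {ω | anytimePValue u S (τ ω) ω ≤ x} ≤ ENNReal.ofReal x) := by
  have hvalid := fun x (hx : x ∈ Set.Ioo (0:ℝ) 1) =>
    measure_exists_anytimePValue_le P hanti hnull hx
  refine ⟨fun t j _ _ ω => anytimePValue_antitone u S ω (Nat.le_add_right t j), hvalid, ?_⟩
  intro τ _ x hx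
  refine (measure_mono ?_).trans (hvalid x hx)
  exact fun ω hω => ⟨τ ω, hω⟩

/-- Properties of the anytime p-value: it is nonincreasing in `t`; under the null it is
uniformly valid, `P(∃t : 𝔭_t ≤ x) ≤ x`; and it is valid at any stopping time `τ`. -/
theorem anytime_pvalue_properties {Ω : Type*} [m0 : MeasurableSpace Ω]
    (P : Measure Ω) [IsProbabilityMeasure P]
    (ℱ : Filtration ℕ m0) (S : ℕ → Ω → ℝ) (hadapted : Adapted ℱ S)
    (u : ℝ → ℕ → ℝ)
    (hcont : ∀ k, ContinuousOn (fun a => u a k) (Set.Ioo (0:ℝ) 1))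
    (hanti : ∀ k, StrictAntiOn (fun a => u a k) (Set.Ioo (0:ℝ) 1))
    (hnull : ∀ a ∈ Set.Ioo (0:ℝ) 1, P {ω | ∃ k, u a k < S k ω} ≤ ENNReal.ofReal a) :
    (∀ t j : ℕ, 0 < t → 0 < j → ∀ ω,
        anytimePValue u S (t + j) ω ≤ anytimePValue u S t ω)
    ∧ (∀ x ∈ Set.Ioo (0:ℝ) 1,
        P {ω | ∃ t, anytimePValue u S t ω ≤ x} ≤ ENNReal.ofReal x)
    ∧ (∀ τ : Ω → ℕ, IsStoppingTime ℱ (fun ω => (τ ω : WithTop ℕ)) → ∀ x ∈ Set.Ioo (0:ℝ) 1,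
        P {ω | anytimePValue u S (τ ω) ω ≤ x} ≤ ENNReal.ofReal x) :=
  anytime_pvalue_properties_general (m0 := m0) P ℱ S u hanti hnull
end
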